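/- Let ε := exp(2πi/3). Let U ⊆ ℂ be open, let z : ℂ → ℂ be three times differentiable on U and satisfy (ε−1)·(x + z(x)) = x·z(x) + 3 for all x ∈ U, and suppose x·(x²+3x+3) ≠ 0 and z(x)·(z(x)²+3z(x)+3) ≠ 0 for all x ∈ U. Let V ⊆ ℂ be open with z(U) ⊆ V, let ψ solve ψ'' = Q₂·ψ on V, and let g : ℂ → ℂ be twice differentiable and nonvanishing on U with g(x)² = z'(x) for all x ∈ U. Then Φ(x) := ψ(z(x))/g(x) solves Φ'' = Q₂·Φ on U. -/

import Mathlib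

open Complex

/-- `f` solves the equation `ψ'' = Q·ψ` on the open set `U`. -/
def SolvesOn (Q f : ℂ → ℂ) (U : Set ℂ) : Prop :=
  (∀ x ∈ U, DifferentiableAt ℂ f x) ∧ (∀ x ∈ U, DifferentiableAt ℂ (deriv f) x) ∧
    ∀ x ∈ U, deriv (deriv f) x = Q x * f x

/-- The coefficient of the normal form (2') of the second Chudnovsky equation. -/
noncomputable def Q₂ (x : ℂ) : ℂ :=
  -(1 / 4) * ((x + 1) * (x + 3) * (x ^ 2 + 3)) / (x ^ 2 * (x ^ 2 + 3 * x + 3) ^ 2)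

/-!
The relation says that `z` is the Möbius map `x ↦ (3 - a x) / (a - x)`, where `a = ε - 1` is
a root of `x² + 3x + 3`. For `Φ = (ψ ∘ z) / g` with `g² = z'` one computes
`Φ'' = (Q(z) z'² + g · (1/g)'') Φ`. For a Möbius map, `(1/g)² = 1/z'` is a constant times
`(x - a)²`, so `1/g` is locally affine and the second term vanishes. What is left,
`Q₂(z) z'² = Q₂`, is a rational identity modulo `a² + 3a + 3 = 0`: the substitution permutes,
up to constant factors, the factors of the numerator and of the denominator of `Q₂`.
-/

open Filter Topology

section

variable {𝕜 : Type*} [NontriviallyNormedField 𝕜]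

theorem hasDerivAt_sub_mul_div_sub {a b x : 𝕜} (hx : a - x ≠ 0) :
    HasDerivAt (fun y => (b - a * y) / (a - y)) ((b - a ^ 2) / (a - x) ^ 2) x := by
  have hnum : HasDerivAt (fun y => b - a * y) (-a) x := by
    simpa using ((hasDerivAt_id' x).const_mul a).const_sub b
  have hden : HasDerivAt (fun y => a - y) (-1) x := by
    simpa using (hasDerivAt_id' x).const_sub a
  refine (hnum.fun_div hden hx).congr_deriv ?_
  field_simp
  ring

theorem hasDerivAt_zero_of_eventually_sq_eq [CharZero 𝕜] {f : 𝕜 → 𝕜} {x c : 𝕜}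
    (hf : DifferentiableAt 𝕜 f x) (hsq : ∀ᶠ y in 𝓝 x, f y ^ 2 = c) (hx : f x ≠ 0) :
    HasDerivAt f 0 x := by
  have hconst : HasDerivAt (fun y => f y ^ 2) 0 x :=
    (hasDerivAt_const x c).congr_of_eventuallyEq hsq
  have hpow : HasDerivAt (fun y => f y ^ 2) (2 * f x * deriv f x) x := by
    simpa using hf.hasDerivAt.fun_pow 2
  have h0 : deriv f x = 0 := by simpa [hx] using hpow.unique hconst
  exact h0 ▸ hf.hasDerivAt

theorem hasDerivAt_deriv_zero_of_sq_eq_mul_sq [CharZero 𝕜] {f : 𝕜 → 𝕜} {U : Set 𝕜}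
    {a c x : 𝕜} (hU : IsOpen U) (hf : ∀ y ∈ U, DifferentiableAt 𝕜 f y)
    (hsq : ∀ y ∈ U, f y ^ 2 = c * (y - a) ^ 2) (hf0 : ∀ y ∈ U, f y ≠ 0) (hx : x ∈ U) :
    HasDerivAt (deriv f) 0 x := by
  have ha : ∀ y ∈ U, y - a ≠ 0 := fun y hy h => hf0 y hy (by simpa [h] using hsq y hy)
  set k : 𝕜 → 𝕜 := fun y => f y / (y - a)
  have hk : ∀ y ∈ U, HasDerivAt k 0 y := by
    intro y hy
    refine hasDerivAt_zero_of_eventually_sq_eq (c := c)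
      ((hf y hy).div ((hasDerivAt_id y).sub_const a).differentiableAt (ha y hy))
      ((hU.eventually_mem hy).mono fun t ht => ?_) (div_ne_zero (hf0 y hy) (ha y hy))
    rw [div_pow, hsq t ht, mul_div_cancel_right₀ _ (pow_ne_zero 2 (ha t ht))]
  have hderiv : ∀ y ∈ U, deriv f y = k y := by
    intro y hy
    have hfk : f =ᶠ[𝓝 y] fun t => k t * (t - a) :=
      (hU.eventually_mem hy).mono fun t ht => (div_mul_cancel₀ _ (ha t ht)).symm
    rw [hfk.deriv_eq]
    simpa using ((hk y hy).fun_mul ((hasDerivAt_id' y).sub_const a)).deriv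
  exact (hk x hx).congr_of_eventuallyEq ((hU.eventually_mem hx).mono hderiv)

end

theorem SolvesOn.congr_coeff {Q Q' f : ℂ → ℂ} {U : Set ℂ} (h : SolvesOn Q f U)
    (hQ : Set.EqOn Q Q' U) : SolvesOn Q' f U :=
  ⟨h.1, h.2.1, fun x hx => hQ hx ▸ h.2.2 x hx⟩

/-- `g · (1/g)''` is `-1/2` times the Schwarzian derivative of `z`. -/
theorem SolvesOn.comp_div {Q ψ z g : ℂ → ℂ} {U V : Set ℂ} (hU : IsOpen U)
    (hψ : SolvesOn Q ψ V) (hzV : Set.MapsTo z U V) (hz : ∀ x ∈ U, HasDerivAt z (g x ^ 2) x)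
    (hg : ∀ x ∈ U, DifferentiableAt ℂ g x) (hg0 : ∀ x ∈ U, g x ≠ 0)
    (hg' : ∀ x ∈ U, DifferentiableAt ℂ (deriv fun y => (g y)⁻¹) x) :
    SolvesOn (fun x => Q (z x) * g x ^ 4 + g x * deriv (deriv fun y => (g y)⁻¹) x)
      (fun x => ψ (z x) / g x) U := by
  obtain ⟨hψ1, hψ2, hψ3⟩ := hψ
  set h : ℂ → ℂ := fun y => (g y)⁻¹
  have hh : ∀ x ∈ U, HasDerivAt h (-deriv g x / g x ^ 2) x := fun x hx =>
    (hg x hx).hasDerivAt.fun_inv (hg0 x hx)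
  set Φ' : ℂ → ℂ := fun x => deriv ψ (z x) * g x + ψ (z x) * deriv h x
  have hΦ : ∀ x ∈ U, HasDerivAt (fun x => ψ (z x) / g x) (Φ' x) x := by
    intro x hx
    have hfun : (fun x => ψ (z x) / g x) = fun x => (ψ ∘ z) x * h x :=
      funext fun _ => div_eq_mul_inv _ _
    rw [hfun]
    refine (((hψ1 _ (hzV hx)).hasDerivAt.comp x (hz x hx)).fun_mul (hh x hx)).congr_deriv ?_
    simp only [Φ', h, (hh x hx).deriv, Function.comp_apply]
    field_simp [hg0 x hx]
  have hΦ' : ∀ x ∈ U, HasDerivAt Φ'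
      ((Q (z x) * g x ^ 4 + g x * deriv (deriv h) x) * (ψ (z x) / g x)) x := by
    intro x hx
    have h1 := ((hψ2 _ (hzV hx)).hasDerivAt.comp x (hz x hx)).fun_mul (hg x hx).hasDerivAt
    have h2 := ((hψ1 _ (hzV hx)).hasDerivAt.comp x (hz x hx)).fun_mul (hg' x hx).hasDerivAt
    refine (h1.fun_add h2).congr_deriv ?_
    simp only [Function.comp_apply, hψ3 _ (hzV hx), (hh x hx).deriv]
    field_simp [hg0 x hx]
    ring
  have hderiv : ∀ x ∈ U, deriv (fun x => ψ (z x) / g x) =ᶠ[𝓝 x] Φ' := fun x hx =>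
    (hU.eventually_mem hx).mono fun y hy => (hΦ y hy).deriv
  refine ⟨fun x hx => (hΦ x hx).differentiableAt,
    fun x hx => (hΦ' x hx).differentiableAt.congr_of_eventuallyEq (hderiv x hx), fun x hx => ?_⟩
  rw [(hderiv x hx).deriv_eq, (hΦ' x hx).deriv]

theorem exp_two_pi_I_div_three_sq_add_add_one :
    exp (2 * Real.pi * I / 3) ^ 2 + exp (2 * Real.pi * I / 3) + 1 = 0 := by
  have := (isPrimitiveRoot_exp 3 (by norm_num)).geom_sum_eq_zero (by norm_num)
  rw [Finset.sum_range_succ, Finset.sum_range_succ, Finset.sum_range_one] at this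
  push_cast at this
  linear_combination this

theorem Q₂_div (N D : ℂ) (hD : D ≠ 0) :
    Q₂ (N / D) = -(1 / 4) * ((N + D) * (N + 3 * D) * (N ^ 2 + 3 * D ^ 2)) * D ^ 2 /
      (N ^ 2 * (N ^ 2 + 3 * N * D + 3 * D ^ 2) ^ 2) := by
  unfold Q₂
  field_simp

theorem Q₂_mobius_invariant {a x : ℂ} (ha : a ^ 2 + 3 * a + 3 = 0)
    (hx : x * (x ^ 2 + 3 * x + 3) ≠ 0) (hax : a - x ≠ 0) :
    Q₂ ((3 - a * x) / (a - x)) * ((3 - a ^ 2) / (a - x) ^ 2) ^ 2 = Q₂ x := by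
  have hnum₁ : (3 - a * x + (a - x)) * (3 - a * x + 3 * (a - x)) = a * (x ^ 2 + 3) := by
    linear_combination (x ^ 2 - 4 * x + 3) * ha
  have hnum₂ : (3 - a * x) ^ 2 + 3 * (a - x) ^ 2 = -3 * a * ((x + 1) * (x + 3)) := by
    linear_combination (x ^ 2 + 3) * ha
  have hden : (3 - a * x) ^ 2 + 3 * (3 - a * x) * (a - x) + 3 * (a - x) ^ 2 = -3 * a * x := by
    linear_combination (x ^ 2 - 3 * x + 3) * ha
  have hprod : (3 - a * x) * (a - x) = a * (x ^ 2 + 3 * x + 3) := by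
    linear_combination (-x) * ha
  have hconst : (3 - a ^ 2) ^ 2 = -3 * a ^ 2 := by
    linear_combination (a ^ 2 - 3 * a + 3) * ha
  rw [Q₂_div _ _ hax, hnum₁, hnum₂, hden, div_pow, hconst]
  obtain ⟨hx0, hE⟩ := mul_ne_zero_iff.mp hx
  have hN : 3 - a * x ≠ 0 := fun h => mul_ne_zero (show a ≠ 0 by rintro rfl; norm_num at ha) hE
    (by rw [← hprod, h, zero_mul])
  have hE' : x * (x + 3) + 3 ≠ 0 := by convert hE using 1; ring
  unfold Q₂
  field_simp
  linear_combination
    (x ^ 2 + 3) * (x + 1) * (x + 3) * ((3 - a * x) * (a - x) + a * (x ^ 2 + 3 * x + 3)) * hprod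

theorem chudnovsky_two_automorphism
    (U V : Set ℂ) (hU : IsOpen U)
    (z g ψ : ℂ → ℂ)
    (hrel : ∀ x ∈ U, (Complex.exp (2 * Real.pi * Complex.I / 3) - 1) * (x + z x)
      = x * z x + 3)
    (hxne : ∀ x ∈ U, x * (x ^ 2 + 3 * x + 3) ≠ 0)
    (hzV : Set.MapsTo z U V)
    (hψ : SolvesOn Q₂ ψ V)
    (hg1 : ∀ x ∈ U, DifferentiableAt ℂ g x)
    (hgne : ∀ x ∈ U, g x ≠ 0)
    (hgsq : ∀ x ∈ U, g x ^ 2 = deriv z x) :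
    SolvesOn Q₂ (fun x => ψ (z x) / g x) U := by
  set a := Complex.exp (2 * Real.pi * Complex.I / 3) - 1
  have ha : a ^ 2 + 3 * a + 3 = 0 := by
    linear_combination exp_two_pi_I_div_three_sq_add_add_one
  have hax : ∀ x ∈ U, a - x ≠ 0 := fun x hx h =>
    hxne x hx (by rw [← sub_eq_zero.mp h, ha, mul_zero])
  have hzU : ∀ x ∈ U, z x = (3 - a * x) / (a - x) := fun x hx =>
    (eq_div_iff (hax x hx)).2 (by linear_combination hrel x hx)
  have hz : ∀ x ∈ U, HasDerivAt z ((3 - a ^ 2) / (a - x) ^ 2) x := fun x hx =>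
    (hasDerivAt_sub_mul_div_sub (hax x hx)).congr_of_eventuallyEq ((hU.eventually_mem hx).mono hzU)
  have hgsq' : ∀ x ∈ U, g x ^ 2 = (3 - a ^ 2) / (a - x) ^ 2 := fun x hx =>
    (hgsq x hx).trans (hz x hx).deriv
  have hinv : ∀ x ∈ U, HasDerivAt (deriv fun y => (g y)⁻¹) 0 x := fun x hx =>
    hasDerivAt_deriv_zero_of_sq_eq_mul_sq (c := (3 - a ^ 2)⁻¹) (a := a) hU
      (fun y hy => (hg1 y hy).inv (hgne y hy))
      (fun y hy => by rw [inv_pow, hgsq' y hy, inv_div]; ring)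
      (fun y hy => inv_ne_zero (hgne y hy)) hx
  refine (SolvesOn.comp_div hU hψ hzV (fun x hx => by rw [hgsq' x hx]; exact hz x hx) hg1 hgne
    fun x hx => (hinv x hx).differentiableAt).congr_coeff fun x hx => ?_
  dsimp only
  rw [(hinv x hx).deriv, mul_zero, add_zero, show g x ^ 4 = (g x ^ 2) ^ 2 by ring, hgsq' x hx,
    hzU x hx, Q₂_mobius_invariant ha (hxne x hx) (hax x hx)]
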